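/- arXiv:2001.11095 — 4 statements merged into one kernel-verified Lean document; each statement's English description precedes it below -/
import Mathlib

section
/- For every α ∈ (0,1) the following strict inequalities hold: r₁ < 0 < αc < r₂ < α/c < c < r₃ < 1/c. -/
open Complex

noncomputable def cc (α : ℝ) : ℝ := Real.sqrt (α / (1 - α + α ^ 2))
noncomputable def r1 (α : ℝ) : ℝ := -Real.sqrt α
noncomputable def r2 (α : ℝ) : ℝ := Real.sqrt α * (α * cc α + Real.sqrt α) / (cc α + Real.sqrt α)
noncomputable def r3 (α : ℝ) : ℝ := Real.sqrt α * (cc α + Real.sqrt α) / (α * cc α + Real.sqrt α)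
noncomputable def rp (α : ℝ) : ℂ :=
  (cc α : ℂ) * ((1 + (α : ℂ)) / 2 + Complex.I * (Real.sqrt 3 : ℂ) * ((1 - (α : ℂ)) / 2))
noncomputable def rm (α : ℝ) : ℂ :=
  (cc α : ℂ) * ((1 + (α : ℂ)) / 2 - Complex.I * (Real.sqrt 3 : ℂ) * ((1 - (α : ℂ)) / 2))
noncomputable def R0 (α : ℝ) : ℝ := Real.sqrt α
noncomputable def Ra (α : ℝ) : ℝ := (1 - α) * Real.sqrt α
noncomputable def R1 (α : ℝ) : ℝ := (1 - α) / Real.sqrt α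

/-- Ordering of the zeros `r₁ < 0 < αc < r₂ < α/c < c < r₃ < 1/c`. -/
theorem ordering_of_zeros_and_poles (α : ℝ) (hα0 : 0 < α) (hα1 : α < 1) :
    r1 α < 0 ∧ 0 < α * cc α ∧ α * cc α < r2 α ∧ r2 α < α / cc α ∧
    α / cc α < cc α ∧ cc α < r3 α ∧ r3 α < 1 / cc α := by
  have hs0 : (0:ℝ) < Real.sqrt α := Real.sqrt_pos.2 hα0
  have hs : Real.sqrt α ^ 2 = α := Real.sq_sqrt hα0.le
  have hD : (0:ℝ) < 1 - α + α ^ 2 := by nlinarith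
  have hc0 : 0 < cc α := Real.sqrt_pos.2 (by positivity)
  have hc2' : cc α ^ 2 = α / (1 - α + α ^ 2) := Real.sq_sqrt (by positivity)
  have hc2 : cc α ^ 2 * (1 - α + α ^ 2) = α := by rw [hc2']; field_simp
  have hclt1 : cc α ^ 2 < 1 := by nlinarith
  have haltc : α < cc α ^ 2 := by
    have h2 : 0 < cc α ^ 2 * (α - α ^ 2) := by
      have : 0 < α - α ^ 2 := by nlinarith
      positivity
    nlinarith
  set s := Real.sqrt α with hsdef
  set c := cc α with hcdef
  have h1 : (0:ℝ) < 1 - c ^ 2 := by linarith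
  refine ⟨?_, ?_, ?_, ?_, ?_, ?_, ?_⟩
  · simp only [r1, ← hsdef]; linarith
  · exact mul_pos hα0 hc0
  · simp only [r2, ← hsdef, ← hcdef]
    rw [lt_div_iff₀ (by positivity)]
    nlinarith [mul_pos hα0 h1]
  · simp only [r2, ← hsdef, ← hcdef]
    rw [div_lt_div_iff₀ (by positivity) hc0]
    nlinarith [mul_pos (mul_pos hα0 hs0) h1]
  · rw [div_lt_iff₀ hc0]; nlinarith
  · simp only [r3, ← hsdef, ← hcdef]
    rw [lt_div_iff₀ (by positivity)]
    nlinarith [mul_pos hα0 h1]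
  · simp only [r3, ← hsdef, ← hcdef]
    rw [div_lt_div_iff₀ (by positivity) hc0]
    nlinarith [mul_pos hs0 h1]
end

section
/- Let α ∈ (0,1). Then: (i) |r₊| = |r₋| = |r₁| = R₀; (ii) |r₊ − α/c| = |r₋ − α/c| = |r₃ − α/c| = R_α; (iii) |r₊ − 1/c| = |r₋ − 1/c| = |r₂ − 1/c| = R₁. In other words, r₊, r₋ and r₁ lie on the circle of radius R₀ centered at 0; r₊, r₋ and r₃ lie on the circle of radius R_α centered at α/c; and r₊, r₋ and r₂ lie on the circle of radius R₁ centered at 1/c. -/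
open Complex

/-!
Everything follows from `c² (1 - α + α²) = α`. The zeros `r₊, r₋` are complex conjugates with
`|r±|² = c² (1 - α + α²) = α`, so for real `x` we get `|r± - x|² = α - c (1 + α) x + x²`, which at
`x = α / c` and `x = 1 / c` equals `R_α²` and `R₁²`. The real zeros satisfy `r₃ - α / c = R_α` and
`r₂ - 1 / c = -R₁` once denominators are cleared.
-/

lemma norm_eq_of_normSq_eq {z : ℂ} {R : ℝ} (hR : 0 ≤ R) (h : normSq z = R ^ 2) : ‖z‖ = R := by
  rw [norm_def, h, Real.sqrt_sq hR]

section

open ComplexConjugate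

variable {α : ℝ}

lemma cc_pos (hα : 0 < α) : 0 < cc α :=
  Real.sqrt_pos.mpr (div_pos hα (by nlinarith))

lemma cc_sq_mul (hα : 0 ≤ α) : cc α ^ 2 * (1 - α + α ^ 2) = α := by
  have hD : 0 < 1 - α + α ^ 2 := by nlinarith
  rw [cc, Real.sq_sqrt (div_nonneg hα hD.le), div_mul_cancel₀ _ hD.ne']

lemma Ra_nonneg (hα : α ≤ 1) : 0 ≤ Ra α :=
  mul_nonneg (sub_nonneg.mpr hα) (Real.sqrt_nonneg α)

lemma R1_nonneg (hα : α ≤ 1) : 0 ≤ R1 α :=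
  div_nonneg (sub_nonneg.mpr hα) (Real.sqrt_nonneg α)

lemma rm_eq_conj_rp (α : ℝ) : rm α = conj (rp α) := by
  simp only [rm, rp, map_mul, map_add, map_sub, map_div₀, map_one, map_ofNat, conj_ofReal, conj_I]
  ring

lemma norm_rm_sub_ofReal (α x : ℝ) : ‖rm α - x‖ = ‖rp α - x‖ := by
  rw [rm_eq_conj_rp, ← norm_conj, map_sub, conj_conj, conj_ofReal]

lemma rp_re (α : ℝ) : (rp α).re = cc α * (1 + α) / 2 := by
  simp only [rp, mul_re, ofReal_re, add_re, div_ofNat_re, one_re, I_re, zero_mul, I_im, ofReal_im, mul_zero,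
    sub_self, sub_re, mul_im, one_mul, zero_add, div_ofNat_im, sub_im, one_im, zero_div, add_zero, add_im, sub_zero]
  ring

lemma rp_im (α : ℝ) : (rp α).im = cc α * Real.sqrt 3 * (1 - α) / 2 := by
  simp only [rp, mul_im, ofReal_re, add_im, div_ofNat_im, one_im, ofReal_im, add_zero, zero_div, mul_re, I_re,
    zero_mul, I_im, mul_zero, sub_self, sub_im, one_mul, zero_add, div_ofNat_re, sub_re, one_re, add_re]
  ring

lemma normSq_rp_sub_ofReal (hα : 0 ≤ α) (x : ℝ) :
    normSq (rp α - x) = α - cc α * (1 + α) * x + x ^ 2 := by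
  have h3 : Real.sqrt 3 ^ 2 = 3 := Real.sq_sqrt (by norm_num)
  rw [normSq_apply, sub_re, sub_im, rp_re, rp_im, ofReal_re, ofReal_im]
  linear_combination (cc α ^ 2 * (1 - α) ^ 2 / 4) * h3 + cc_sq_mul hα

lemma norm_rp (hα : 0 ≤ α) : ‖rp α‖ = R0 α := by
  refine norm_eq_of_normSq_eq (Real.sqrt_nonneg α) ?_
  simpa [R0, Real.sq_sqrt hα] using normSq_rp_sub_ofReal hα 0

lemma norm_rm (hα : 0 ≤ α) : ‖rm α‖ = R0 α := by
  rw [rm_eq_conj_rp, norm_conj, norm_rp hα]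

lemma norm_rp_sub_div_cc (hα0 : 0 < α) (hα1 : α ≤ 1) : ‖rp α - ↑(α / cc α)‖ = Ra α := by
  refine norm_eq_of_normSq_eq (Ra_nonneg hα1) ?_
  have hc := (cc_pos hα0).ne'
  rw [normSq_rp_sub_ofReal hα0.le, Ra, mul_pow, Real.sq_sqrt hα0.le]
  field_simp
  linear_combination -cc_sq_mul hα0.le

lemma norm_rp_sub_inv_cc (hα0 : 0 < α) (hα1 : α ≤ 1) : ‖rp α - ↑(cc α)⁻¹‖ = R1 α := by
  refine norm_eq_of_normSq_eq (R1_nonneg hα1) ?_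
  have hc := (cc_pos hα0).ne'
  rw [normSq_rp_sub_ofReal hα0.le, R1, div_pow, Real.sq_sqrt hα0.le]
  field_simp
  linear_combination -cc_sq_mul hα0.le

lemma norm_r1 (α : ℝ) : ‖(r1 α : ℂ)‖ = R0 α := by
  rw [norm_real, Real.norm_eq_abs, r1, abs_neg, abs_of_nonneg (Real.sqrt_nonneg α), R0]

lemma r3_sub_div_cc (hα : 0 < α) : r3 α - α / cc α = Ra α := by
  have hs := Real.sqrt_pos.mpr hα
  have hc := cc_pos hα
  have : 0 < α * cc α + Real.sqrt α := by positivity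
  rw [r3, Ra]
  field_simp
  linear_combination Real.sqrt α * cc_sq_mul hα.le + α * cc α * Real.sq_sqrt hα.le

lemma r2_sub_inv_cc (hα : 0 < α) : r2 α - (cc α)⁻¹ = -R1 α := by
  have hs := Real.sqrt_pos.mpr hα
  have hc := cc_pos hα
  have : 0 < cc α + Real.sqrt α := by positivity
  rw [r2, R1]
  field_simp
  linear_combination cc_sq_mul hα.le + (α * cc α ^ 2 + Real.sqrt α * cc α - 1) * Real.sq_sqrt hα.le

lemma norm_r3_sub_div_cc (hα0 : 0 < α) (hα1 : α ≤ 1) : ‖(r3 α : ℂ) - ↑(α / cc α)‖ = Ra α := by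
  rw [← ofReal_sub, norm_real, r3_sub_div_cc hα0, Real.norm_of_nonneg (Ra_nonneg hα1)]

lemma norm_r2_sub_inv_cc (hα0 : 0 < α) (hα1 : α ≤ 1) : ‖(r2 α : ℂ) - ↑(cc α)⁻¹‖ = R1 α := by
  rw [← ofReal_sub, norm_real, r2_sub_inv_cc hα0, norm_neg, Real.norm_of_nonneg (R1_nonneg hα1)]

end

/-- `r₊, r₋, r₁` lie on the circle `|ζ| = R₀`; `r₊, r₋, r₃` lie on `|ζ - α/c| = R_α`;
`r₊, r₋, r₂` lie on `|ζ - 1/c| = R₁`. -/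
theorem zeros_on_three_circles (α : ℝ) (hα0 : 0 < α) (hα1 : α < 1) :
    ‖rp α‖ = R0 α ∧ ‖rm α‖ = R0 α ∧
    ‖(r1 α : ℂ)‖ = R0 α ∧
    ‖rp α - (α : ℂ) / (cc α : ℂ)‖ = Ra α ∧
    ‖rm α - (α : ℂ) / (cc α : ℂ)‖ = Ra α ∧
    ‖(r3 α : ℂ) - (α : ℂ) / (cc α : ℂ)‖ = Ra α ∧
    ‖rp α - 1 / (cc α : ℂ)‖ = R1 α ∧
    ‖rm α - 1 / (cc α : ℂ)‖ = R1 α ∧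
    ‖(r2 α : ℂ) - 1 / (cc α : ℂ)‖ = R1 α := by
  rw [← ofReal_div, one_div, ← ofReal_inv]
  simp only [norm_rm_sub_ofReal]
  exact ⟨norm_rp hα0.le, norm_rm hα0.le, norm_r1 α, norm_rp_sub_div_cc hα0 hα1.le,
    norm_rp_sub_div_cc hα0 hα1.le, norm_r3_sub_div_cc hα0 hα1.le, norm_rp_sub_inv_cc hα0 hα1.le,
    norm_rp_sub_inv_cc hα0 hα1.le, norm_r2_sub_inv_cc hα0 hα1.le⟩
end

section
/- Let α ∈ (0,1). For every complex ζ with Im ζ > 0 one has Im( −(ζ−α)(ζ+α)(ζ−c)(ζ−1/c) / ((ζ−αc)(ζ−α/c)(ζ−1)(ζ+1)) ) < 0. (The denominator is nonzero since its roots are real.) -/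
open Complex

lemma sub_real_ne_zero (ζ : ℂ) (hζ : 0 < ζ.im) (p : ℝ) : ζ - (p : ℂ) ≠ 0 := by
  intro h
  have := congrArg Complex.im h
  simp at this
  linarith

lemma im_div_neg (ζ : ℂ) (hζ : 0 < ζ.im) (p r : ℝ) (hr : 0 < r) :
    ((r : ℂ) / (ζ - (p : ℂ))).im < 0 := by
  have hne : ζ - (p : ℂ) ≠ 0 := sub_real_ne_zero ζ hζ p
  have hsq : 0 < Complex.normSq (ζ - (p : ℂ)) := Complex.normSq_pos.2 hne
  have heq : ((r : ℂ) / (ζ - (p : ℂ))).im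
      = -(r * ζ.im / Complex.normSq (ζ - (p : ℂ))) := by
    rw [Complex.div_im]
    simp
  rw [heq]
  have : 0 < r * ζ.im / Complex.normSq (ζ - (p : ℂ)) := by positivity
  linarith

set_option maxHeartbeats 4000000 in
lemma partial_fraction' (A C ζ : ℂ)
    (h1 : ζ - A * C ≠ 0) (h2 : C * ζ - A ≠ 0) (h3 : ζ - 1 ≠ 0) (h4 : ζ + 1 ≠ 0)
    (d3 : 1 - A * C ≠ 0) (d4 : C - A ≠ 0) (d5 : 1 + A * C ≠ 0) (d6 : C + A ≠ 0) :
    -((ζ - A) * (ζ + A) * (ζ - C) * (C * ζ - 1)) /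
      ((ζ - A * C) * (C * ζ - A) * (ζ - 1) * (ζ + 1))
    = -1 + A * C * (1 - A) * (1 - A * C ^ 2) / ((1 - A * C) * (1 + A * C) * (ζ - A * C))
        + A * (C ^ 2 - A) * (1 - A) / ((C - A) * (C + A) * (C * ζ - A))
        + (1 - A ^ 2) * (1 - C) ^ 2 / (2 * (1 - A * C) * (C - A) * (ζ - 1))
        + (1 - A ^ 2) * (1 + C) ^ 2 / (2 * (1 + A * C) * (C + A) * (ζ + 1)) := by
  have hD1 : (1 - A * C) * (1 + A * C) * (ζ - A * C) ≠ 0 :=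
    mul_ne_zero (mul_ne_zero d3 d5) h1
  have hD2 : (C - A) * (C + A) * (C * ζ - A) ≠ 0 :=
    mul_ne_zero (mul_ne_zero d4 d6) h2
  have hD3 : 2 * (1 - A * C) * (C - A) * (ζ - 1) ≠ 0 :=
    mul_ne_zero (mul_ne_zero (mul_ne_zero two_ne_zero d3) d4) h3
  have hD4 : 2 * (1 + A * C) * (C + A) * (ζ + 1) ≠ 0 :=
    mul_ne_zero (mul_ne_zero (mul_ne_zero two_ne_zero d5) d6) h4
  have hDL : (ζ - A * C) * (C * ζ - A) * (ζ - 1) * (ζ + 1) ≠ 0 :=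
    mul_ne_zero (mul_ne_zero (mul_ne_zero h1 h2) h3) h4
  rw [show (-1 : ℂ) = (-1) / 1 from (div_one _).symm]
  rw [div_add_div _ _ one_ne_zero hD1]
  rw [div_add_div _ _ (mul_ne_zero one_ne_zero hD1) hD2]
  rw [div_add_div _ _ (mul_ne_zero (mul_ne_zero one_ne_zero hD1) hD2) hD3]
  rw [div_add_div _ _ (mul_ne_zero (mul_ne_zero (mul_ne_zero one_ne_zero hD1) hD2) hD3) hD4]
  rw [div_eq_div_iff hDL
    (mul_ne_zero (mul_ne_zero (mul_ne_zero (mul_ne_zero one_ne_zero hD1) hD2) hD3) hD4)]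
  ring

set_option maxHeartbeats 2000000 in
/-- Inequality (4.5) of the paper: the imaginary part of the displayed rational function
is negative on the open upper half-plane. -/
theorem im_rational_neg_on_upper_half_plane (α : ℝ) (hα0 : 0 < α) (hα1 : α < 1)
    (ζ : ℂ) (hζ : 0 < ζ.im) :
    (-((ζ - (α : ℂ)) * (ζ + (α : ℂ)) * (ζ - (cc α : ℂ)) * (ζ - 1 / (cc α : ℂ))) /
      ((ζ - (α : ℂ) * (cc α : ℂ)) * (ζ - (α : ℂ) / (cc α : ℂ)) * (ζ - 1) * (ζ + 1))).im
      < 0 := by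
  set c : ℝ := cc α with hc
  -- basic facts about c
  have hs : 0 < 1 - α + α ^ 2 := by nlinarith
  have hc2 : c ^ 2 = α / (1 - α + α ^ 2) := by
    rw [hc, cc, Real.sq_sqrt]
    positivity
  have hc0 : 0 < c := by
    rw [hc, cc]; positivity
  have hc2' : c ^ 2 * (1 - α + α ^ 2) = α := by
    rw [hc2]; field_simp
  have hca : α < c ^ 2 := by
    nlinarith [hc2', mul_pos (pow_pos hc0 2) (show (0:ℝ) < 1 - (1 - α + α ^ 2) by nlinarith)]
  have hc2lt1 : c ^ 2 < 1 := by
    nlinarith [hc2', hs, sq_nonneg (1 - α)]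
  have hc1 : c < 1 := by nlinarith [hc0]
  have hac : α < c := by nlinarith [hc0]
  have hac1 : α * c < 1 := by nlinarith
  have ha1 : (0:ℝ) < 1 - α := by linarith
  have ha2 : (0:ℝ) < 1 - α ^ 2 := by nlinarith
  -- residues
  set r1 : ℝ := α * c * (1 - α) * (1 - α * c ^ 2) / ((1 - α * c) * (1 + α * c)) with hr1def
  set r2 : ℝ := α * (c ^ 2 - α) * (1 - α) / (c * ((c - α) * (c + α))) with hr2def
  set r3 : ℝ := (1 - α ^ 2) * (1 - c) ^ 2 / (2 * (1 - α * c) * (c - α)) with hr3def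
  set r4 : ℝ := (1 - α ^ 2) * (1 + c) ^ 2 / (2 * (1 + α * c) * (c + α)) with hr4def
  have hr1 : 0 < r1 := by
    rw [hr1def]
    have h2 : (0:ℝ) < 1 - α * c ^ 2 := by nlinarith
    exact div_pos (mul_pos (mul_pos (mul_pos hα0 hc0) ha1) h2)
      (mul_pos (by nlinarith) (by nlinarith))
  have hr2 : 0 < r2 := by
    rw [hr2def]
    exact div_pos (mul_pos (mul_pos hα0 (by linarith)) ha1)
      (mul_pos hc0 (mul_pos (by linarith) (by linarith)))
  have hr3 : 0 < r3 := by
    rw [hr3def]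
    exact div_pos (mul_pos ha2 (pow_pos (by linarith) 2))
      (mul_pos (mul_pos (by norm_num) (by nlinarith)) (by linarith))
  have hr4 : 0 < r4 := by
    rw [hr4def]
    exact div_pos (mul_pos ha2 (pow_pos (by linarith) 2))
      (mul_pos (mul_pos (by norm_num) (by nlinarith)) (by linarith))
  -- nonvanishing of complex denominators
  have h1 : ζ - ((α : ℂ) * (c : ℂ)) ≠ 0 := by
    have := sub_real_ne_zero ζ hζ (α * c); push_cast at this; exact this
  have h2 : ζ - ((α : ℂ) / (c : ℂ)) ≠ 0 := by
    have := sub_real_ne_zero ζ hζ (α / c); push_cast at this; exact this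
  have h3 : ζ - 1 ≠ 0 := by
    have := sub_real_ne_zero ζ hζ 1; push_cast at this; exact this
  have h4 : ζ + 1 ≠ 0 := by
    have := sub_real_ne_zero ζ hζ (-1); push_cast at this
    simpa [sub_neg_eq_add] using this
  have hcC : (c : ℂ) ≠ 0 := by exact_mod_cast hc0.ne'
  have h2' : (c : ℂ) * ζ - (α : ℂ) ≠ 0 := by
    intro h
    have him := congrArg Complex.im h
    simp [Complex.mul_im] at him
    rcases him with him | him
    · exact (ne_of_gt hc0) him
    · exact (ne_of_gt hζ) him
  -- real-to-complex nonzero facts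
  have rc : ∀ x : ℝ, x ≠ 0 → ((x : ℝ) : ℂ) ≠ 0 := fun x hx => Complex.ofReal_ne_zero.2 hx
  have d3C : 1 - (α : ℂ) * (c : ℂ) ≠ 0 := by
    have := rc (1 - α * c) (by nlinarith); push_cast at this; exact this
  have d4C : (c : ℂ) - (α : ℂ) ≠ 0 := by
    have := rc (c - α) (by linarith); push_cast at this; exact this
  have d5C : 1 + (α : ℂ) * (c : ℂ) ≠ 0 := by
    have := rc (1 + α * c) (by nlinarith); push_cast at this; exact this
  have d6C : (c : ℂ) + (α : ℂ) ≠ 0 := by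
    have := rc (c + α) (by linarith); push_cast at this; exact this
  -- convert the displayed fraction to the cleared form
  have hDorig : (ζ - (α : ℂ) * (c : ℂ)) * (ζ - (α : ℂ) / (c : ℂ)) * (ζ - 1) * (ζ + 1) ≠ 0 :=
    mul_ne_zero (mul_ne_zero (mul_ne_zero h1 h2) h3) h4
  have hDL : (ζ - (α : ℂ) * (c : ℂ)) * ((c : ℂ) * ζ - (α : ℂ)) * (ζ - 1) * (ζ + 1) ≠ 0 :=
    mul_ne_zero (mul_ne_zero (mul_ne_zero h1 h2') h3) h4
  have eL :
      (-((ζ - (α : ℂ)) * (ζ + (α : ℂ)) * (ζ - (c : ℂ)) * (ζ - 1 / (c : ℂ))) /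
        ((ζ - (α : ℂ) * (c : ℂ)) * (ζ - (α : ℂ) / (c : ℂ)) * (ζ - 1) * (ζ + 1)))
      = -((ζ - (α : ℂ)) * (ζ + (α : ℂ)) * (ζ - (c : ℂ)) * ((c : ℂ) * ζ - 1)) /
        ((ζ - (α : ℂ) * (c : ℂ)) * ((c : ℂ) * ζ - (α : ℂ)) * (ζ - 1) * (ζ + 1)) := by
    rw [div_eq_div_iff hDorig hDL]
    field_simp
  have key := partial_fraction' (α : ℂ) (c : ℂ) ζ h1 h2' h3 h4 d3C d4C d5C d6C
  -- identify the residue terms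
  have t1 : ((r1 : ℝ) : ℂ) / (ζ - ((α * c : ℝ) : ℂ))
      = (α : ℂ) * (c : ℂ) * (1 - (α : ℂ)) * (1 - (α : ℂ) * (c : ℂ) ^ 2) /
        ((1 - (α : ℂ) * (c : ℂ)) * (1 + (α : ℂ) * (c : ℂ)) * (ζ - (α : ℂ) * (c : ℂ))) := by
    rw [hr1def]
    push_cast
    rw [div_div]
  have t2 : ((r2 : ℝ) : ℂ) / (ζ - ((α / c : ℝ) : ℂ))
      = (α : ℂ) * ((c : ℂ) ^ 2 - (α : ℂ)) * (1 - (α : ℂ)) /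
        (((c : ℂ) - (α : ℂ)) * ((c : ℂ) + (α : ℂ)) * ((c : ℂ) * ζ - (α : ℂ))) := by
    rw [hr2def]
    push_cast
    rw [div_div, div_eq_div_iff
      (mul_ne_zero (mul_ne_zero hcC (mul_ne_zero d4C d6C)) h2)
      (mul_ne_zero (mul_ne_zero d4C d6C) h2')]
    field_simp
  have t3 : ((r3 : ℝ) : ℂ) / (ζ - ((1 : ℝ) : ℂ))
      = (1 - (α : ℂ) ^ 2) * (1 - (c : ℂ)) ^ 2 /
        (2 * (1 - (α : ℂ) * (c : ℂ)) * ((c : ℂ) - (α : ℂ)) * (ζ - 1)) := by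
    rw [hr3def]
    push_cast
    rw [div_div]
  have t4 : ((r4 : ℝ) : ℂ) / (ζ - ((-1 : ℝ) : ℂ))
      = (1 - (α : ℂ) ^ 2) * (1 + (c : ℂ)) ^ 2 /
        (2 * (1 + (α : ℂ) * (c : ℂ)) * ((c : ℂ) + (α : ℂ)) * (ζ + 1)) := by
    rw [hr4def]
    push_cast [sub_neg_eq_add]
    rw [div_div]
  rw [eL, key, ← t1, ← t2, ← t3, ← t4]
  have i1 := im_div_neg ζ hζ (α * c) r1 hr1
  have i2 := im_div_neg ζ hζ (α / c) r2 hr2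
  have i3 := im_div_neg ζ hζ 1 r3 hr3
  have i4 := im_div_neg ζ hζ (-1) r4 hr4
  simp only [Complex.add_im, Complex.neg_im, Complex.one_im, neg_zero]
  linarith
end

section
/- Let α ∈ (0,1), let N be a positive integer, and define W(ζ) = ((ζ−αc)(ζ−α/c)/(ζ(ζ−c)(ζ−1/c)))^{2N} for ζ ∉ {0, c, 1/c}. Then for every complex ζ with ζ ∉ {0, c, 1/c} and ζ⋆ ∉ {0, c}, one has W(ζ⋆) = ((ζ−1/c)^{4N}/R₁^{4N})·W(ζ). -/
/-!
The star operation is the Möbius involution `ζ ↦ p + r / (ζ - p)` with `p = 1/c`, `r = R₁²`,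
and it swaps `0 ↔ c` and `αc ↔ α/c`. If such an involution swaps `a` and `a'`, then
`ζ⋆ - a = (a - p)(a' - ζ)/(ζ - p)`, so each linear factor of the rational function inside `W`
turns into its partner factor times `(a - p)/(ζ - p)`. The constants cancel because
`(a - p)(a' - p) = r` for both pairs, which leaves the factor `(ζ - p)² / r`.
-/

open Complex

/-- The star operation `ζ⋆ = 1/c + R₁²/(ζ − 1/c)`. -/
noncomputable def star (α : ℝ) (ζ : ℂ) : ℂ :=
  1 / (cc α : ℂ) + ((R1 α : ℝ) : ℂ) ^ 2 / (ζ - 1 / (cc α : ℂ))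

/-- The scalar weight `W` from equation (3.1) of the paper. -/
noncomputable def Wweight (α : ℝ) (N : ℕ) (ζ : ℂ) : ℂ :=
  (((ζ - (α : ℂ) * (cc α : ℂ)) * (ζ - (α : ℂ) / (cc α : ℂ))) /
    (ζ * (ζ - (cc α : ℂ)) * (ζ - 1 / (cc α : ℂ)))) ^ (2 * N)

section MobiusInversion

variable {K : Type*} [Field K]

def mobiusInversion (p r ζ : K) : K := p + r / (ζ - p)

theorem mobiusInversion_self (p r : K) : mobiusInversion p r p = p := by
  simp [mobiusInversion]

theorem mobiusInversion_sub_self (p r ζ : K) : mobiusInversion p r ζ - p = r / (ζ - p) := by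
  rw [mobiusInversion, add_sub_cancel_left]

/- The hypothesis `(a - p) * (a' - p) = r` says that `mobiusInversion p r` swaps `a` and `a'`. -/
theorem mobiusInversion_sub_of_mul_eq {p r a a' ζ : K} (h : (a - p) * (a' - p) = r)
    (hζ : ζ ≠ p) :
    mobiusInversion p r ζ - a = (a - p) * (a' - ζ) / (ζ - p) := by
  rw [mobiusInversion, ← h]
  field_simp [sub_ne_zero.mpr hζ]
  ring

theorem div_comp_mobiusInversion {p r a a' b b' : K} (ha : (a - p) * (a' - p) = r)
    (hb : (b - p) * (b' - p) = r) (ζ : K) :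
    let ζ' := mobiusInversion p r ζ
    (ζ' - a) * (ζ' - a') / ((ζ' - b) * (ζ' - b') * (ζ' - p)) =
      (ζ - p) ^ 2 / r * ((ζ - a) * (ζ - a') / ((ζ - b) * (ζ - b') * (ζ - p))) := by
  intro ζ'
  rcases eq_or_ne ζ p with rfl | hζ
  · simp [ζ', mobiusInversion_self]
  rcases eq_or_ne r 0 with rfl | hr
  · simp [ζ', mobiusInversion]
  have hbp : b - p ≠ 0 := left_ne_zero_of_mul (hb ▸ hr)
  have hb'p : b' - p ≠ 0 := right_ne_zero_of_mul (hb ▸ hr)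
  have ha' : (a' - p) * (a - p) = r := by rw [mul_comm, ha]
  have hb' : (b' - p) * (b - p) = r := by rw [mul_comm, hb]
  simp only [ζ', mobiusInversion_sub_self,
    mobiusInversion_sub_of_mul_eq ha hζ, mobiusInversion_sub_of_mul_eq ha' hζ,
    mobiusInversion_sub_of_mul_eq hb hζ, mobiusInversion_sub_of_mul_eq hb' hζ]
  field_simp
  rw [show (b' - ζ) * (b - ζ) = (ζ - b) * (ζ - b') by ring, hb, ← ha]
  ring

end MobiusInversion

section Parameters

variable {α : ℝ}

theorem one_sub_add_sq_pos (α : ℝ) : 0 < 1 - α + α ^ 2 := by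
  nlinarith [sq_nonneg (α - 1 / 2)]

theorem inv_cc_sq (hα : 0 < α) : (cc α ^ 2)⁻¹ = (1 - α + α ^ 2) / α := by
  rw [cc, Real.sq_sqrt (div_pos hα (one_sub_add_sq_pos α)).le, inv_div]

theorem cc_ne_zero (hα : 0 < α) : cc α ≠ 0 :=
  (Real.sqrt_pos.mpr (div_pos hα (one_sub_add_sq_pos α))).ne'

theorem R1_sq (hα : 0 < α) : R1 α ^ 2 = (cc α ^ 2)⁻¹ - 1 := by
  rw [inv_cc_sq hα, R1, div_pow, Real.sq_sqrt hα.le]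
  field_simp
  ring

theorem zero_cc_swapped (hα : 0 < α) :
    ((0 : ℂ) - 1 / cc α) * (cc α - 1 / cc α) = (R1 α : ℂ) ^ 2 := by
  have hc := cc_ne_zero hα
  have h : (0 - 1 / cc α) * (cc α - 1 / cc α) = R1 α ^ 2 := by
    rw [R1_sq hα]
    field_simp
    ring
  exact_mod_cast h

theorem alpha_mul_cc_div_cc_swapped (hα : 0 < α) :
    ((α : ℂ) * cc α - 1 / cc α) * ((α : ℂ) / cc α - 1 / cc α) = (R1 α : ℂ) ^ 2 := by
  have hc := cc_ne_zero hα
  have h : (α * cc α - 1 / cc α) * (α / cc α - 1 / cc α) = R1 α ^ 2 := by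
    have hκ := inv_cc_sq hα
    rw [R1_sq hα]
    field_simp
    field_simp at hκ
    linear_combination -hκ
  exact_mod_cast h

end Parameters

theorem star_eq_mobiusInversion (α : ℝ) (ζ : ℂ) :
    star α ζ = mobiusInversion (1 / cc α : ℂ) ((R1 α : ℂ) ^ 2) ζ := rfl

theorem W_star_symmetry_general (α : ℝ) (hα0 : 0 < α) (N : ℕ)
    (ζ : ℂ) :
    Wweight α N (star α ζ) =
      ((ζ - 1 / (cc α : ℂ)) ^ (4 * N) / ((R1 α : ℂ)) ^ (4 * N)) * Wweight α N ζ := by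
  have h := div_comp_mobiusInversion (alpha_mul_cc_div_cc_swapped hα0) (zero_cc_swapped hα0) ζ
  simp only [sub_zero] at h
  rw [Wweight, Wweight, star_eq_mobiusInversion, h, mul_pow, div_pow, ← pow_mul, ← pow_mul,
    show 2 * (2 * N) = 4 * N by ring]

/-- The symmetry (6.9) of the paper: `W(ζ⋆) = ((ζ−1/c)^{4N}/R₁^{4N}) W(ζ)`. -/
theorem W_star_symmetry (α : ℝ) (hα0 : 0 < α) (hα1 : α < 1) (N : ℕ) (hN : 0 < N)
    (ζ : ℂ)
    (hζ : ζ ∉ ({0, ((cc α : ℂ)), 1 / (cc α : ℂ)} : Set ℂ))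
    (hstar : star α ζ ∉ ({0, ((cc α : ℂ))} : Set ℂ)) :
    Wweight α N (star α ζ) =
      ((ζ - 1 / (cc α : ℂ)) ^ (4 * N) / ((R1 α : ℂ)) ^ (4 * N)) * Wweight α N ζ :=
  W_star_symmetry_general α hα0 N ζ
end
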